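/- For every choice of projection functions g₊, g₋ : 𝒞 → ℝ^{d_z} and every measurable critic ψ for which the quantities I_NCE^{self-p} and R are finite, the projection-based InfoNCE loss bounds mutual information as I(X;C) ≥ 1 + log N − I_NCE^{self-p} − R. (Proposition 1, the ProjNCE mutual-information bound.) -/

import Mathlib

/-!
Write `J` for the law of `(X, C)` and `Π` for the product of its marginals. As `C` takes finitely
many values, `J = Π.withDensity F` with `F (x, c) = d law(X | C = c) / d law(X) (x)`. Drawing the
other labels independently lifts this to `P_i = Q.withDensity (F ∘ φᵢ)`, where `φᵢ (x, c) = (x, cᵢ)`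
pushes `P_i` forward to `J` and `Q` to `Π`; hence `KL(P_i ‖ Q) = I(X;C)` for every `i`.
For `h > 0`, the inequality `log t ≤ t - 1` at `t = h / (dP/dQ)` gives the bound
`E_P[log h] - KL(P ‖ Q) + 1 ≤ E_Q[h]` of Nguyen–Wainwright–Jordan. Apply it with
`h = N e^{ψ(f x, g₊(cᵢ))} / Σⱼ e^{ψ(f x, g₋(cⱼ))}` and average over `i`: the right-hand sides add up
to `R`.
-/

open MeasureTheory ProbabilityTheory Filter
open scoped Classical ENNReal Topology

/-- The Kullback–Leibler divergence `KL(P‖Q) = ∫ log (dP/dQ) dP`, with value `+∞`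
when `P` is not absolutely continuous with respect to `Q` (or the integral is undefined). -/
noncomputable def klDivergence {Ω : Type*} [MeasurableSpace Ω] (P Q : Measure Ω) : EReal :=
  if P ≪ Q ∧ Integrable (fun ω => Real.log ((P.rnDeriv Q ω).toReal)) P
  then ((∫ ω, Real.log ((P.rnDeriv Q ω).toReal) ∂P : ℝ) : EReal)
  else ⊤

/-- The mutual information `I(X;C) := KL(law(X,C) ‖ law(X) ⊗ law(C))`. -/
noncomputable def mutualInfo {Ω 𝓧 𝒞 : Type*} [MeasurableSpace Ω] [MeasurableSpace 𝓧]
    [MeasurableSpace 𝒞] (μ : Measure Ω) (X : Ω → 𝓧) (C : Ω → 𝒞) : EReal :=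
  klDivergence (μ.map (fun ω => (X ω, C ω))) ((μ.map X).prod (μ.map C))

/-- The conditional law of `X` given `C = c`. -/
noncomputable def condLaw {Ω 𝓧 𝒞 : Type*} [MeasurableSpace Ω] [MeasurableSpace 𝓧]
    [MeasurableSpace 𝒞] (μ : Measure Ω) (X : Ω → 𝓧) (C : Ω → 𝒞) (c : 𝒞) : Measure 𝓧 :=
  (μ[|C ⁻¹' {c}]).map X

/-- The law `P_i` of `(X, (C_1, …, C_N))` under which `C_1, …, C_N` are i.i.d. copies of `C`
and `X` is drawn from the conditional law of `X` given `C = C_i`, conditionally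
independently of the other `C_j`. -/
noncomputable def Pmeas {Ω 𝓧 𝒞 : Type*} [MeasurableSpace Ω] [MeasurableSpace 𝓧]
    [MeasurableSpace 𝒞] (μ : Measure Ω) (X : Ω → 𝓧) (C : Ω → 𝒞) (N : ℕ) (i : Fin N) :
    Measure (𝓧 × (Fin N → 𝒞)) :=
  (Measure.pi fun _ : Fin N => μ.map C).bind
    (fun cs => (condLaw μ X C (cs i)).map (fun x => (x, cs)))

/-- The law `Q` of `(X, (C_1, …, C_N))` under which `X` has the marginal law of `X` and is
independent of `C_1, …, C_N`, which are i.i.d. copies of `C`. -/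
noncomputable def Qmeas {Ω 𝓧 𝒞 : Type*} [MeasurableSpace Ω] [MeasurableSpace 𝓧]
    [MeasurableSpace 𝒞] (μ : Measure Ω) (X : Ω → 𝓧) (C : Ω → 𝒞) (N : ℕ) :
    Measure (𝓧 × (Fin N → 𝒞)) :=
  (μ.map X).prod (Measure.pi fun _ : Fin N => μ.map C)


theorem test : True := trivial

theorem bind_map_prodMk_eq_withDensity {α β : Type*} [MeasurableSpace α] [MeasurableSpace β]
    [Countable β] [MeasurableSingletonClass β] (ν : Measure α) [SigmaFinite ν]
    (m : Measure β) [SFinite m] (κ : β → Measure α) [∀ b, SigmaFinite (κ b)]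
    (hκ : ∀ b, κ b ≪ ν) :
    (fun b => (κ b).map (·, b)) ∘ₘ m
      = (ν.prod m).withDensity (fun y => (κ y.2).rnDeriv ν y.1) := by
  have hF : Measurable (fun y : α × β => (κ y.2).rnDeriv ν y.1) :=
    measurable_from_prod_countable_left fun b => Measure.measurable_rnDeriv (κ b) ν
  ext s hs
  rw [Measure.bind_apply hs Measurable.of_discrete.aemeasurable, withDensity_apply _ hs,
    ← lintegral_indicator hs, lintegral_prod_symm' _ (hF.indicator hs)]
  refine lintegral_congr fun b => ?_
  have hsb : MeasurableSet ((·, b) ⁻¹' s : Set α) := measurable_prodMk_right hs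
  conv_lhs => rw [Measure.map_apply measurable_prodMk_right hs,
    ← Measure.withDensity_rnDeriv_eq _ _ (hκ b)]
  rw [withDensity_apply _ hsb, ← lintegral_indicator hsb]
  rfl

theorem map_withDensity_comp {α β : Type*} [MeasurableSpace α] [MeasurableSpace β]
    (μ : Measure α) {g : α → β} (hg : Measurable g) {f : β → ℝ≥0∞} (hf : Measurable f) :
    (μ.withDensity (f ∘ g)).map g = (μ.map g).withDensity f := by
  ext s hs
  rw [Measure.map_apply hg hs, withDensity_apply _ (hg hs), withDensity_apply _ hs,
    setLIntegral_map hs hf hg]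
  rfl

theorem klDivergence_withDensity {Ω : Type*} [MeasurableSpace Ω] (Q : Measure Ω) [SigmaFinite Q]
    {ρ : Ω → ℝ≥0∞} (hρ : Measurable ρ) :
    klDivergence (Q.withDensity ρ) Q =
      if Integrable (fun ω => Real.log (ρ ω).toReal) (Q.withDensity ρ)
      then ((∫ ω, Real.log (ρ ω).toReal ∂(Q.withDensity ρ) : ℝ) : EReal) else ⊤ := by
  have hlog : (fun ω => Real.log ((Q.withDensity ρ).rnDeriv Q ω).toReal)
      =ᵐ[Q.withDensity ρ] fun ω => Real.log (ρ ω).toReal := by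
    have h := (withDensity_absolutelyContinuous Q ρ).ae_le (Measure.rnDeriv_withDensity Q hρ)
    filter_upwards [h] with ω hω
    rw [hω]
  simp only [klDivergence, withDensity_absolutelyContinuous, true_and, integrable_congr hlog,
    integral_congr_ae hlog]

theorem integral_log_sub_integral_log_density_add_one_le {α : Type*} [MeasurableSpace α]
    {P Q : Measure α} [IsProbabilityMeasure P] {ρ : α → ℝ≥0∞} (hρ : Measurable ρ)
    (hPQ : P = Q.withDensity ρ) {h : α → ℝ} (hh : Measurable h) (hpos : ∀ x, 0 < h x)
    (hlogh : Integrable (fun x => Real.log (h x)) P)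
    (hlogρ : Integrable (fun x => Real.log (ρ x).toReal) P) (hhQ : Integrable h Q) :
    ∫ x, Real.log (h x) ∂P - ∫ x, Real.log (ρ x).toReal ∂P + 1 ≤ ∫ x, h x ∂Q := by
  have hρ_lt_top : ∀ᵐ x ∂Q, ρ x < ∞ := by
    refine ae_lt_top hρ ?_
    rw [← setLIntegral_univ, ← withDensity_apply _ MeasurableSet.univ, ← hPQ]
    exact measure_ne_top P _
  have hρ_pos_lt_top : ∀ᵐ x ∂P, 0 < (ρ x).toReal := by
    rw [hPQ, ae_withDensity_iff hρ]
    filter_upwards [hρ_lt_top] with x hx h0 using ENNReal.toReal_pos h0 hx.ne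
  set q : α → ℝ := fun x => h x / (ρ x).toReal
  have hρq : ∀ x, 0 ≤ (ρ x).toReal * q x ∧ (ρ x).toReal * q x ≤ h x := fun x => by
    rcases eq_or_lt_of_le (ENNReal.toReal_nonneg (a := ρ x)) with h0 | h0
    · simp [q, ← h0, (hpos x).le]
    · simp [q, mul_div_cancel₀ _ h0.ne', (hpos x).le]
  have hq_int : Integrable q P := by
    rw [hPQ, integrable_withDensity_iff_integrable_smul' hρ hρ_lt_top]
    refine hhQ.mono' (hρ.ennreal_toReal.mul (hh.div hρ.ennreal_toReal)).aestronglyMeasurable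
      (ae_of_all _ fun x => ?_)
    rw [smul_eq_mul, Real.norm_of_nonneg (hρq x).1]
    exact (hρq x).2
  have hq_le : ∫ x, q x ∂P ≤ ∫ x, h x ∂Q := by
    rw [hPQ, integral_withDensity_eq_integral_toReal_smul hρ hρ_lt_top]
    exact integral_mono_of_nonneg (ae_of_all _ fun x => (hρq x).1) hhQ
      (ae_of_all _ fun x => (hρq x).2)
  have hpointwise : ∀ᵐ x ∂P, Real.log (h x) - Real.log (ρ x).toReal + 1 ≤ q x := by
    filter_upwards [hρ_pos_lt_top] with x hx
    have := Real.log_le_sub_one_of_pos (div_pos (hpos x) hx)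
    rw [Real.log_div (hpos x).ne' hx.ne'] at this
    linarith
  calc ∫ x, Real.log (h x) ∂P - ∫ x, Real.log (ρ x).toReal ∂P + 1
      = ∫ x, (Real.log (h x) - Real.log (ρ x).toReal + 1) ∂P := by
        rw [integral_add (f := fun x => Real.log (h x) - Real.log (ρ x).toReal)
          (hlogh.sub hlogρ) (integrable_const 1), integral_sub hlogh hlogρ]
        simp
    _ ≤ ∫ x, q x ∂P :=
        integral_mono_ae ((hlogh.sub hlogρ).add (integrable_const 1)) hq_int hpointwise
    _ ≤ ∫ x, h x ∂Q := hq_le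

theorem one_add_log_card_sub_le_of_eq_withDensity {α ι : Type*} [MeasurableSpace α]
    [Fintype ι] [Nonempty ι]
    {P : ι → Measure α} [∀ i, IsProbabilityMeasure (P i)] {Q : Measure α}
    {ρ : ι → α → ℝ≥0∞} (hρ : ∀ i, Measurable (ρ i)) (hPQ : ∀ i, P i = Q.withDensity (ρ i))
    (hρ_int : ∀ i, Integrable (fun x => Real.log (ρ i x).toReal) (P i)) {I : ℝ}
    (hI : ∀ i, ∫ x, Real.log (ρ i x).toReal ∂(P i) = I)
    {s : ι → α → ℝ} (hs : ∀ i, Measurable (s i)) (hs_pos : ∀ i x, 0 < s i x)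
    (hs_log : ∀ i, Integrable (fun x => -Real.log (s i x)) (P i))
    (hs_sum : Integrable (fun x => ∑ i, s i x) Q) :
    1 + Real.log (Fintype.card ι) - (1 / Fintype.card ι) * ∑ i, ∫ x, -Real.log (s i x) ∂(P i)
      - ∫ x, ∑ i, s i x ∂Q ≤ I := by
  set n : ℝ := (Fintype.card ι : ℝ) with hn_def
  have hn : 0 < n := Nat.cast_pos.2 Fintype.card_pos
  have hs_int : ∀ i, Integrable (s i) Q := fun i =>
    hs_sum.mono' (hs i).aestronglyMeasurable (ae_of_all _ fun x => by
      rw [Real.norm_of_nonneg (hs_pos i x).le]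
      exact Finset.single_le_sum (fun j _ => (hs_pos j x).le) (Finset.mem_univ i))
  have hbound : ∀ i, 1 + Real.log n - ∫ x, -Real.log (s i x) ∂(P i) - I
      ≤ n * ∫ x, s i x ∂Q := fun i => by
    have hlog : ∀ x, Real.log (n * s i x) = Real.log n - -Real.log (s i x) := fun x => by
      rw [Real.log_mul hn.ne' (hs_pos i x).ne']; ring
    have hnwj := integral_log_sub_integral_log_density_add_one_le (hρ i) (hPQ i)
      ((hs i).const_mul n) (fun x => mul_pos hn (hs_pos i x))
      (by simp_rw [hlog]; exact (integrable_const _).sub (hs_log i)) (hρ_int i)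
      ((hs_int i).const_mul n)
    simp_rw [hlog] at hnwj
    rw [integral_sub (integrable_const _) (hs_log i), integral_const, integral_const_mul,
      hI i] at hnwj
    simp only [probReal_univ, one_smul] at hnwj
    linarith
  have hsum := Finset.sum_le_sum fun i (_ : i ∈ Finset.univ) => hbound i
  simp only [Finset.sum_sub_distrib, Finset.sum_const, Finset.card_univ, nsmul_eq_mul,
    ← Finset.mul_sum, ← hn_def] at hsum
  rw [integral_finsetSum _ fun i _ => hs_int i]
  refine le_of_mul_le_mul_left ?_ hn
  rw [mul_sub, mul_sub, mul_add, one_div_mul_eq_div, mul_div_cancel₀ _ hn.ne']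
  linarith

theorem MeasureTheory.MeasurePreserving.integral_comp_of_aestronglyMeasurable
    {α β E : Type*} [MeasurableSpace α] [MeasurableSpace β] [NormedAddCommGroup E]
    [NormedSpace ℝ E] {μ : Measure α} {ν : Measure β} {f : α → β} (hf : MeasurePreserving f μ ν)
    {g : β → E} (hg : AEStronglyMeasurable g ν) :
    ∫ x, g (f x) ∂μ = ∫ y, g y ∂ν := by
  rw [← hf.map_eq, integral_map hf.measurable.aemeasurable (hf.map_eq ▸ hg)]

section Sampling

variable {Ω 𝓧 𝒞 : Type*} [MeasurableSpace Ω] [MeasurableSpace 𝓧] [MeasurableSpace 𝒞]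
  {μ : Measure Ω} {X : Ω → 𝓧} {C : Ω → 𝒞}

instance (c : 𝒞) [IsFiniteMeasure μ] : IsFiniteMeasure (condLaw μ X C c) := by
  unfold condLaw; infer_instance

theorem condLaw_absolutelyContinuous (hX : Measurable X) (c : 𝒞) :
    condLaw μ X C c ≪ μ.map X :=
  cond_absolutelyContinuous.map hX

noncomputable def condDensity (μ : Measure Ω) (X : Ω → 𝓧) (C : Ω → 𝒞) (y : 𝓧 × 𝒞) : ℝ≥0∞ :=
  (condLaw μ X C y.2).rnDeriv (μ.map X) y.1

theorem measurable_condDensity [Countable 𝒞] [MeasurableSingletonClass 𝒞] :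
    Measurable (condDensity μ X C) :=
  measurable_from_prod_countable_left fun c =>
    Measure.measurable_rnDeriv (condLaw μ X C c) (μ.map X)

theorem map_prodMk_eq_withDensity [Fintype 𝒞] [MeasurableSingletonClass 𝒞] [IsFiniteMeasure μ]
    (hX : Measurable X) (hC : Measurable C) :
    μ.map (fun ω => (X ω, C ω)) = ((μ.map X).prod (μ.map C)).withDensity (condDensity μ X C) := by
  unfold condDensity
  rw [← bind_map_prodMk_eq_withDensity _ _ _ (condLaw_absolutelyContinuous hX)]
  ext s hs
  have hfiber : ∀ c, MeasurableSet (C ⁻¹' {c}) := fun c => hC (measurableSet_singleton c)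
  rw [Measure.bind_apply hs Measurable.of_discrete.aemeasurable, lintegral_fintype,
    Measure.map_apply (hX.prodMk hC) hs]
  conv_lhs => rw [← sum_meas_smul_cond_fiber hC μ]
  simp only [Measure.coe_finsetSum, Finset.sum_apply, Measure.smul_apply, smul_eq_mul]
  refine Finset.sum_congr rfl fun c _ => ?_
  rw [Measure.map_apply hC (measurableSet_singleton c), mul_comm, condLaw,
    Measure.map_apply measurable_prodMk_right hs,
    Measure.map_apply hX (measurable_prodMk_right hs), ← cond_inter_self (hfiber c),
    ← cond_inter_self (hfiber c) (X ⁻¹' _)]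
  congr 1
  refine congrArg (μ[· | C ⁻¹' {c}]) (Set.ext fun ω => ?_)
  simp only [Set.mem_inter_iff, Set.mem_preimage, Set.mem_singleton_iff]
  constructor <;> rintro ⟨rfl, h⟩ <;> exact ⟨rfl, h⟩

theorem Pmeas_eq_withDensity [Countable 𝒞] [MeasurableSingletonClass 𝒞] [IsFiniteMeasure μ]
    (hX : Measurable X) (N : ℕ) (i : Fin N) :
    Pmeas μ X C N i
      = (Qmeas μ X C N).withDensity fun p => condDensity μ X C (p.1, p.2 i) := by
  have h := bind_map_prodMk_eq_withDensity (μ.map X) (Measure.pi fun _ : Fin N => μ.map C)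
    (fun cs => condLaw μ X C (cs i)) fun _ => condLaw_absolutelyContinuous hX _
  rw [Pmeas, Qmeas, h]
  rfl

theorem map_Qmeas [IsProbabilityMeasure μ] (hC : Measurable C) {N : ℕ} (i : Fin N) :
    (Qmeas μ X C N).map (fun p => (p.1, p.2 i)) = (μ.map X).prod (μ.map C) := by
  have : IsProbabilityMeasure (μ.map C) := Measure.isProbabilityMeasure_map hC.aemeasurable
  calc (Qmeas μ X C N).map (fun p => (p.1, p.2 i))
      = ((μ.map X).map id).prod ((Measure.pi fun _ : Fin N => μ.map C).map (Function.eval i)) :=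
        (Measure.map_prod_map _ _ measurable_id (measurable_pi_apply i)).symm
    _ = (μ.map X).prod (μ.map C) := by
        rw [Measure.map_id, (measurePreserving_eval (fun _ => μ.map C) i).map_eq]

theorem measurePreserving_Pmeas [Fintype 𝒞] [MeasurableSingletonClass 𝒞] [IsProbabilityMeasure μ]
    (hX : Measurable X) (hC : Measurable C) {N : ℕ} (i : Fin N) :
    MeasurePreserving (fun p => (p.1, p.2 i)) (Pmeas μ X C N i)
      (((μ.map X).prod (μ.map C)).withDensity (condDensity μ X C)) := by
  have hφ : Measurable fun p : 𝓧 × (Fin N → 𝒞) => (p.1, p.2 i) :=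
    measurable_fst.prodMk ((measurable_pi_apply i).comp measurable_snd)
  refine ⟨hφ, ?_⟩
  rw [Pmeas_eq_withDensity hX, ← map_Qmeas hC i]
  simpa only [Function.comp_def] using
    map_withDensity_comp (Qmeas μ X C N) hφ measurable_condDensity

theorem isProbabilityMeasure_Pmeas [Fintype 𝒞] [MeasurableSingletonClass 𝒞]
    [IsProbabilityMeasure μ] (hX : Measurable X) (hC : Measurable C) {N : ℕ} (i : Fin N) :
    IsProbabilityMeasure (Pmeas μ X C N i) := by
  have := Measure.isProbabilityMeasure_map (μ := μ) (hX.prodMk hC).aemeasurable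
  rw [map_prodMk_eq_withDensity hX hC, ← (measurePreserving_Pmeas hX hC i).map_eq] at this
  exact Measure.isProbabilityMeasure_of_map fun p => (p.1, p.2 i)

end Sampling

theorem stmt_2_general {Ω 𝓧 : Type*} [MeasurableSpace Ω] [MeasurableSpace 𝓧]
    {M dz : ℕ} (μ : Measure Ω) [IsProbabilityMeasure μ]
    (X : Ω → 𝓧) (C : Ω → Fin M) (hX : Measurable X) (hC : Measurable C)
    (N : ℕ) (hN : 1 ≤ N)
    (f : 𝓧 → EuclideanSpace ℝ (Fin dz)) (hf : Measurable f)
    (gp gm : Fin M → EuclideanSpace ℝ (Fin dz))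
    (ψ : EuclideanSpace ℝ (Fin dz) → EuclideanSpace ℝ (Fin dz) → ℝ)
    (hψ : Measurable (fun p : EuclideanSpace ℝ (Fin dz) × EuclideanSpace ℝ (Fin dz) =>
      ψ p.1 p.2))
    (hintP : ∀ i : Fin N, Integrable (fun p : 𝓧 × (Fin N → Fin M) =>
      -Real.log (Real.exp (ψ (f p.1) (gp (p.2 i))) /
        ∑ j : Fin N, Real.exp (ψ (f p.1) (gm (p.2 j))))) (Pmeas μ X C N i))
    (hintQ : Integrable (fun p : 𝓧 × (Fin N → Fin M) =>
      (∑ k : Fin N, Real.exp (ψ (f p.1) (gp (p.2 k)))) /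
        ∑ k : Fin N, Real.exp (ψ (f p.1) (gm (p.2 k)))) (Qmeas μ X C N)) :
    ((1 + Real.log N
        - (1 / N) * ∑ i : Fin N, ∫ p, -Real.log (Real.exp (ψ (f p.1) (gp (p.2 i))) /
            ∑ j : Fin N, Real.exp (ψ (f p.1) (gm (p.2 j)))) ∂(Pmeas μ X C N i)
        - ∫ p, (∑ k : Fin N, Real.exp (ψ (f p.1) (gp (p.2 k)))) /
            (∑ k : Fin N, Real.exp (ψ (f p.1) (gm (p.2 k)))) ∂(Qmeas μ X C N) : ℝ) : EReal)
      ≤ mutualInfo μ X C := by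
  have : Nonempty (Fin N) := ⟨⟨0, hN⟩⟩
  have := isProbabilityMeasure_Pmeas (μ := μ) hX hC (N := N)
  have hmp := measurePreserving_Pmeas (μ := μ) hX hC (N := N)
  rw [mutualInfo, map_prodMk_eq_withDensity hX hC,
    klDivergence_withDensity _ measurable_condDensity]
  split_ifs with hint
  swap
  · exact le_top
  have hexp : ∀ (g : Fin M → EuclideanSpace ℝ (Fin dz)) (j : Fin N),
      Measurable fun p : 𝓧 × (Fin N → Fin M) => Real.exp (ψ (f p.1) (g (p.2 j))) :=
    fun g j => (hψ.comp ((hf.comp measurable_fst).prodMk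
      (Measurable.of_discrete.comp ((measurable_pi_apply j).comp measurable_snd)))).exp
  have hD : ∀ p : 𝓧 × (Fin N → Fin M), 0 < ∑ j, Real.exp (ψ (f p.1) (gm (p.2 j))) :=
    fun p => Finset.sum_pos (fun j _ => Real.exp_pos _) Finset.univ_nonempty
  have key := one_add_log_card_sub_le_of_eq_withDensity
    (s := fun i p => Real.exp (ψ (f p.1) (gp (p.2 i))) /
      ∑ j : Fin N, Real.exp (ψ (f p.1) (gm (p.2 j))))
    (fun i => by simpa only [Function.comp_def] using
      measurable_condDensity.comp (hmp i).measurable)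
    (Pmeas_eq_withDensity hX N)
    (fun i => by simpa only [Function.comp_def] using
      (hmp i).integrable_comp_of_integrable hint)
    (fun i => (hmp i).integral_comp_of_aestronglyMeasurable hint.1)
    (fun i => (hexp gp i).div (Finset.measurable_sum _ fun j _ => hexp gm j))
    (fun i p => div_pos (Real.exp_pos _) (hD p)) hintP
    (by simpa only [Finset.sum_div] using hintQ)
  exact EReal.coe_le_coe_iff.2 (by simpa only [Fintype.card_fin, Finset.sum_div] using key)

/-- Proposition 1, the ProjNCE mutual-information bound:
for every choice of projections `g₊, g₋ : 𝒞 → ℝ^{d_z}` and every measurable critic `ψ`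
for which `I_NCE^{self-p}` and `R` are finite,
`I(X;C) ≥ 1 + log N − I_NCE^{self-p} − R`. -/
theorem stmt_2 {Ω 𝓧 : Type*} [MeasurableSpace Ω] [MeasurableSpace 𝓧]
    {M dz : ℕ} (μ : Measure Ω) [IsProbabilityMeasure μ]
    (X : Ω → 𝓧) (C : Ω → Fin M) (hX : Measurable X) (hC : Measurable C)
    (hpos : ∀ c : Fin M, 0 < μ (C ⁻¹' {c}))
    (N : ℕ) (hN : 1 ≤ N)
    (f : 𝓧 → EuclideanSpace ℝ (Fin dz)) (hf : Measurable f)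
    (gp gm : Fin M → EuclideanSpace ℝ (Fin dz))
    (ψ : EuclideanSpace ℝ (Fin dz) → EuclideanSpace ℝ (Fin dz) → ℝ)
    (hψ : Measurable (fun p : EuclideanSpace ℝ (Fin dz) × EuclideanSpace ℝ (Fin dz) =>
      ψ p.1 p.2))
    (hintP : ∀ i : Fin N, Integrable (fun p : 𝓧 × (Fin N → Fin M) =>
      -Real.log (Real.exp (ψ (f p.1) (gp (p.2 i))) /
        ∑ j : Fin N, Real.exp (ψ (f p.1) (gm (p.2 j))))) (Pmeas μ X C N i))
    (hintQ : Integrable (fun p : 𝓧 × (Fin N → Fin M) =>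
      (∑ k : Fin N, Real.exp (ψ (f p.1) (gp (p.2 k)))) /
        ∑ k : Fin N, Real.exp (ψ (f p.1) (gm (p.2 k)))) (Qmeas μ X C N)) :
    ((1 + Real.log N
        - (1 / N) * ∑ i : Fin N, ∫ p, -Real.log (Real.exp (ψ (f p.1) (gp (p.2 i))) /
            ∑ j : Fin N, Real.exp (ψ (f p.1) (gm (p.2 j)))) ∂(Pmeas μ X C N i)
        - ∫ p, (∑ k : Fin N, Real.exp (ψ (f p.1) (gp (p.2 k)))) /
            (∑ k : Fin N, Real.exp (ψ (f p.1) (gm (p.2 k)))) ∂(Qmeas μ X C N) : ℝ) : EReal)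
      ≤ mutualInfo μ X C :=
  stmt_2_general μ X C hX hC N hN f hf gp gm ψ hψ hintP hintQ
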